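/- For the lid-driven cavity equilibrium problem, the zero velocity field u = 0 together with the pressure field p of Eq. (the piecewise log profile) satisfies the weak momentum balance for all divergence-free test fields v vanishing on ∂Ω: ∫_Ω p div v dv = ∫_B P̂ : ∇v dV with P̂ = -p_s F^{-T} + μ F(uΘ⊗uΘ) and F = I, i.e., the elastic body-force term is balanced by the pressure gradient. -/

import Mathlib

/-!
Since `div v = 0` the pressure drops out, and in polar coordinates `(ρ, θ)` about the centre of
the ring the right-hand side becomes `μ ∫∫ ρ e_θ·(∇v e_θ) dθ dρ` over the annulus. On each circle,
`ρ e_θ·(∇v e_θ) = ∂_θ(v·e_θ) + v·e_r`. The first term integrates to zero by periodicity. The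
second is the flux of `v` through the circle: by `div v = 0`,
`∂_ρ(ρ v·e_r) = -∂_θ(v·e_θ)`, so `ρ ∫ v·e_r dθ` does not depend on `ρ` and vanishes at `ρ = 0`.
-/
open Real MeasureTheory Matrix

/-- The matrix of partial derivatives `(∇v)_{ij} = ∂v_i/∂x_j`. -/
noncomputable def gradM (v : (Fin 2 → ℝ) → (Fin 2 → ℝ)) (x : Fin 2 → ℝ) :
    Matrix (Fin 2) (Fin 2) ℝ := fun i j => fderiv ℝ v x (Pi.single j 1) i

/-- Frobenius inner product of matrices. -/
def frob (A B : Matrix (Fin 2) (Fin 2) ℝ) : ℝ := ∑ i, ∑ j, A i j * B i j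

open Set

theorem HasDerivAt.dotProduct {ι : Type*} [Fintype ι] {f g : ℝ → ι → ℝ} {f' g' : ι → ℝ}
    {t : ℝ} (hf : HasDerivAt f f' t) (hg : HasDerivAt g g' t) :
    HasDerivAt (fun s => f s ⬝ᵥ g s) (f' ⬝ᵥ g t + f t ⬝ᵥ g') t := by
  simp only [_root_.dotProduct, ← Finset.sum_add_distrib]
  exact HasDerivAt.fun_sum fun i _ => (hasDerivAt_pi.1 hf i).mul (hasDerivAt_pi.1 hg i)

theorem fderiv_apply_eq_gradM_mulVec (v : (Fin 2 → ℝ) → (Fin 2 → ℝ)) (x u : Fin 2 → ℝ) :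
    fderiv ℝ v x u = gradM v x *ᵥ u := by
  conv_lhs => rw [pi_eq_sum_univ' u]
  ext i
  simp [mulVec, dotProduct, gradM, mul_comm]

theorem HasDerivAt.gradM_comp {v : (Fin 2 → ℝ) → (Fin 2 → ℝ)} (hv : Differentiable ℝ v)
    {γ : ℝ → Fin 2 → ℝ} {γ' : Fin 2 → ℝ} {t : ℝ} (hγ : HasDerivAt γ γ' t) :
    HasDerivAt (fun s => v (γ s)) (gradM v (γ t) *ᵥ γ') t := by
  rw [← fderiv_apply_eq_gradM_mulVec]
  exact (hv (γ t)).hasFDerivAt.comp_hasDerivAt t hγ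

theorem ContDiff.continuous_gradM {v : (Fin 2 → ℝ) → (Fin 2 → ℝ)} (hv : ContDiff ℝ 1 v) :
    Continuous (gradM v) :=
  continuous_pi fun i => continuous_pi fun _ =>
    (continuous_apply i).comp ((hv.continuous_fderiv one_ne_zero).clm_apply continuous_const)

noncomputable def radialUnit (θ : ℝ) : Fin 2 → ℝ := ![cos θ, sin θ]

noncomputable def angularUnit (θ : ℝ) : Fin 2 → ℝ := ![-sin θ, cos θ]

noncomputable def polarPoint (c : Fin 2 → ℝ) (ρ θ : ℝ) : Fin 2 → ℝ := c + ρ • radialUnit θ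

@[simp] theorem polarPoint_apply_zero (c : Fin 2 → ℝ) (ρ θ : ℝ) :
    polarPoint c ρ θ 0 = c 0 + ρ * cos θ := by
  simp [polarPoint, radialUnit]

@[simp] theorem polarPoint_apply_one (c : Fin 2 → ℝ) (ρ θ : ℝ) :
    polarPoint c ρ θ 1 = c 1 + ρ * sin θ := by
  simp [polarPoint, radialUnit]

theorem hasDerivAt_radialUnit (θ : ℝ) : HasDerivAt radialUnit (angularUnit θ) θ := by
  refine hasDerivAt_pi.2 fun i => ?_
  fin_cases i
  · simpa [radialUnit, angularUnit] using hasDerivAt_cos θ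
  · simpa [radialUnit, angularUnit] using hasDerivAt_sin θ

theorem hasDerivAt_angularUnit (θ : ℝ) : HasDerivAt angularUnit (-radialUnit θ) θ := by
  refine hasDerivAt_pi.2 fun i => ?_
  fin_cases i
  · simpa [radialUnit, angularUnit] using (hasDerivAt_sin θ).fun_neg
  · simpa [radialUnit, angularUnit] using hasDerivAt_cos θ

theorem hasDerivAt_polarPoint_angle (c : Fin 2 → ℝ) (ρ θ : ℝ) :
    HasDerivAt (polarPoint c ρ) (ρ • angularUnit θ) θ :=
  ((hasDerivAt_radialUnit θ).const_smul ρ).const_add c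

theorem hasDerivAt_polarPoint_radius (c : Fin 2 → ℝ) (ρ θ : ℝ) :
    HasDerivAt (fun ρ => polarPoint c ρ θ) (radialUnit θ) ρ := by
  simpa only [polarPoint, id, one_smul] using
    ((hasDerivAt_id ρ).smul_const (radialUnit θ)).const_add c

theorem continuous_polarPoint (c : Fin 2 → ℝ) :
    Continuous fun q : ℝ × ℝ => polarPoint c q.1 q.2 := by
  unfold polarPoint radialUnit
  fun_prop

theorem dotProduct_mulVec_radialUnit_add_angularUnit (A : Matrix (Fin 2) (Fin 2) ℝ) (θ : ℝ) :
    radialUnit θ ⬝ᵥ (A *ᵥ radialUnit θ) + angularUnit θ ⬝ᵥ (A *ᵥ angularUnit θ) = A.trace := by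
  simp only [radialUnit, angularUnit, dotProduct, mulVec, trace, diag, Fin.sum_univ_two,
    cons_val_zero, cons_val_one]
  linear_combination (A 0 0 + A 1 1) * sin_sq_add_cos_sq θ

noncomputable def radialComponent (v : (Fin 2 → ℝ) → (Fin 2 → ℝ)) (c : Fin 2 → ℝ) (ρ θ : ℝ) :
    ℝ :=
  v (polarPoint c ρ θ) ⬝ᵥ radialUnit θ

noncomputable def angularComponent (v : (Fin 2 → ℝ) → (Fin 2 → ℝ)) (c : Fin 2 → ℝ) (ρ θ : ℝ) :
    ℝ :=
  v (polarPoint c ρ θ) ⬝ᵥ angularUnit θ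

noncomputable def hoopStrain (v : (Fin 2 → ℝ) → (Fin 2 → ℝ)) (c : Fin 2 → ℝ) (ρ θ : ℝ) : ℝ :=
  angularUnit θ ⬝ᵥ (gradM v (polarPoint c ρ θ) *ᵥ angularUnit θ)

section PolarComponents

variable {v : (Fin 2 → ℝ) → (Fin 2 → ℝ)} (c : Fin 2 → ℝ)

theorem hasDerivAt_angularComponent (hv : Differentiable ℝ v) (ρ θ : ℝ) :
    HasDerivAt (angularComponent v c ρ)
      (ρ * hoopStrain v c ρ θ - radialComponent v c ρ θ) θ := by
  refine (((hasDerivAt_polarPoint_angle c ρ θ).gradM_comp hv).dotProduct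
    (hasDerivAt_angularUnit θ)).congr_deriv ?_
  rw [mulVec_smul, smul_dotProduct, dotProduct_neg, dotProduct_comm, smul_eq_mul,
    ← sub_eq_add_neg]
  rfl

theorem hasDerivAt_mul_radialComponent (hv : Differentiable ℝ v) (ρ θ : ℝ)
    (hdiv : (gradM v (polarPoint c ρ θ)).trace = 0) :
    HasDerivAt (fun ρ => ρ * radialComponent v c ρ θ)
      (-(ρ * hoopStrain v c ρ θ - radialComponent v c ρ θ)) ρ := by
  refine ((hasDerivAt_id' ρ).mul (((hasDerivAt_polarPoint_radius c ρ θ).gradM_comp hv).dotProduct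
    (hasDerivAt_const ρ (radialUnit θ)))).congr_deriv ?_
  have htrace := dotProduct_mulVec_radialUnit_add_angularUnit (gradM v (polarPoint c ρ θ)) θ
  rw [hdiv, dotProduct_comm] at htrace
  simp only [hoopStrain, radialComponent, dotProduct_zero, add_zero, one_mul]
  linear_combination ρ * htrace

theorem continuous_radialComponent (hv : Continuous v) :
    Continuous fun q : ℝ × ℝ => radialComponent v c q.1 q.2 :=
  (hv.comp (continuous_polarPoint c)).dotProduct (by unfold radialUnit; fun_prop)

theorem continuous_hoopStrain (hv : ContDiff ℝ 1 v) :
    Continuous fun q : ℝ × ℝ => hoopStrain v c q.1 q.2 := by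
  have hu : Continuous fun q : ℝ × ℝ => angularUnit q.2 := by unfold angularUnit; fun_prop
  exact hu.dotProduct ((hv.continuous_gradM.comp (continuous_polarPoint c)).matrix_mulVec hu)

theorem continuous_mul_hoopStrain_sub_radialComponent (hv : ContDiff ℝ 1 v) :
    Continuous fun q : ℝ × ℝ => q.1 * hoopStrain v c q.1 q.2 - radialComponent v c q.1 q.2 :=
  (continuous_fst.mul (continuous_hoopStrain c hv)).sub
    (continuous_radialComponent c hv.continuous)

theorem integral_mul_hoopStrain_sub_radialComponent_eq_zero (hv : ContDiff ℝ 1 v) (ρ : ℝ) :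
    ∫ θ in (-π)..π, (ρ * hoopStrain v c ρ θ - radialComponent v c ρ θ) = 0 := by
  rw [intervalIntegral.integral_eq_sub_of_hasDerivAt
    (fun θ _ => hasDerivAt_angularComponent c (hv.differentiable one_ne_zero) ρ θ)
    (((continuous_mul_hoopStrain_sub_radialComponent c hv).comp
      (continuous_const.prodMk continuous_id)).intervalIntegrable _ _)]
  simp [angularComponent, polarPoint, radialUnit, angularUnit]

theorem integral_radialComponent_eq_zero (hv : ContDiff ℝ 1 v)
    (hdiv : ∀ x, (gradM v x).trace = 0) {ρ : ℝ} (hρ : ρ ≠ 0) :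
    ∫ θ in (-π)..π, radialComponent v c ρ θ = 0 := by
  set D := fun t θ => t * hoopStrain v c t θ - radialComponent v c t θ
  have hD := continuous_mul_hoopStrain_sub_radialComponent c hv
  have hslice : ∀ θ, ρ * radialComponent v c ρ θ = -∫ t in (0)..ρ, D t θ := by
    intro θ
    rw [← intervalIntegral.integral_neg, intervalIntegral.integral_eq_sub_of_hasDerivAt
      (fun t _ => hasDerivAt_mul_radialComponent c (hv.differentiable one_ne_zero) t θ (hdiv _))
      ((hD.comp (continuous_id.prodMk continuous_const)).neg.intervalIntegrable _ _)]
    ring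
  have hswap : IntegrableOn (Function.uncurry fun θ t => D t θ) (uIoc (-π) π ×ˢ uIoc 0 ρ) :=
    ((hD.comp continuous_swap).continuousOn.integrableOn_compact
      (isCompact_uIcc.prod isCompact_uIcc)).mono_set (prod_mono uIoc_subset_uIcc uIoc_subset_uIcc)
  have hflux : ρ * ∫ θ in (-π)..π, radialComponent v c ρ θ = 0 := calc
    ρ * ∫ θ in (-π)..π, radialComponent v c ρ θ
        = -∫ θ in (-π)..π, ∫ t in (0)..ρ, D t θ := by
      rw [← intervalIntegral.integral_const_mul, ← intervalIntegral.integral_neg]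
      simp_rw [hslice]
    _ = -∫ t in (0)..ρ, ∫ θ in (-π)..π, D t θ := by
      rw [intervalIntegral_intervalIntegral_swap hswap]
    _ = 0 := by simp [D, integral_mul_hoopStrain_sub_radialComponent_eq_zero c hv]
  exact (mul_eq_zero.1 hflux).resolve_left hρ

theorem integral_mul_hoopStrain_eq_zero (hv : ContDiff ℝ 1 v)
    (hdiv : ∀ x, (gradM v x).trace = 0) (ρ : ℝ) :
    ∫ θ in (-π)..π, ρ * hoopStrain v c ρ θ = 0 := by
  rcases eq_or_ne ρ 0 with rfl | hρ
  · simp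
  have h := integral_mul_hoopStrain_sub_radialComponent_eq_zero c hv ρ
  rwa [intervalIntegral.integral_sub, integral_radialComponent_eq_zero c hv hdiv hρ,
    sub_zero] at h
  · exact ((continuous_fst.mul (continuous_hoopStrain c hv)).comp
      (continuous_const.prodMk continuous_id)).intervalIntegrable _ _
  · exact ((continuous_radialComponent c hv.continuous).comp
      (continuous_const.prodMk continuous_id)).intervalIntegrable _ _

end PolarComponents

theorem frob_smul_one_add_smul_vecMulVec (a b : ℝ) (u : Fin 2 → ℝ)
    (A : Matrix (Fin 2) (Fin 2) ℝ) :
    frob (a • 1 + b • vecMulVec u u) A = a * A.trace + b * (u ⬝ᵥ (A *ᵥ u)) := by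
  simp only [frob, trace, diag, dotProduct, mulVec, Fin.sum_univ_two, Matrix.add_apply,
    Matrix.smul_apply, one_apply_eq, one_apply_ne zero_ne_one, one_apply_ne one_ne_zero,
    vecMulVec_apply, smul_eq_mul]
  ring

theorem sqrt_polarPoint_sub_center {c : Fin 2 → ℝ} {ρ : ℝ} (hρ : 0 ≤ ρ) (θ : ℝ) :
    √((polarPoint c ρ θ 0 - c 0) ^ 2 + (polarPoint c ρ θ 1 - c 1) ^ 2) = ρ := by
  rw [polarPoint_apply_zero, polarPoint_apply_one, add_sub_cancel_left, add_sub_cancel_left,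
    mul_pow, mul_pow, ← mul_add, cos_sq_add_sin_sq, mul_one, sqrt_sq hρ]

theorem integral_comp_polarPoint {E : Type*} [NormedAddCommGroup E] [NormedSpace ℝ E]
    (c : Fin 2 → ℝ) (f : (Fin 2 → ℝ) → E) :
    ∫ x, f x = ∫ q in polarCoord.target, q.1 • f (polarPoint c q.1 q.2) := by
  have hpolar : ∀ q : ℝ × ℝ,
      MeasurableEquiv.finTwoArrow.symm (polarCoord.symm q + (c 0, c 1)) = polarPoint c q.1 q.2 := by
    intro q
    funext i
    fin_cases i <;> simp [MeasurableEquiv.finTwoArrow, MeasurableEquiv.piFinTwo, add_comm]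
  rw [← ((volume_preserving_finTwoArrow ℝ).symm _).integral_comp
      (MeasurableEquiv.measurableEmbedding _),
    ← integral_add_right_eq_self _ (c 0, c 1), ← integral_comp_polarCoord_symm]
  simp only [hpolar]

theorem setIntegral_prod_eq_zero_of_forall_setIntegral_eq_zero {α β E : Type*} [MeasurableSpace α]
    [MeasurableSpace β] [NormedAddCommGroup E] [NormedSpace ℝ E] {μ : Measure α} {ν : Measure β}
    [SFinite μ] [SFinite ν] {f : α × β → E} {s : Set α} {t : Set β}
    (h : ∀ x ∈ s, ∫ y in t, f (x, y) ∂ν = 0) :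
    ∫ z in s ×ˢ t, f z ∂μ.prod ν = 0 := by
  by_cases hf : IntegrableOn f (s ×ˢ t) (μ.prod ν)
  · rw [setIntegral_prod f hf]
    exact setIntegral_eq_zero_of_forall_eq_zero h
  · exact integral_undef hf

theorem ring_weak_momentum_balance_general (μ R w l : ℝ)
    (v : (Fin 2 → ℝ) → (Fin 2 → ℝ)) (hv : ContDiff ℝ 1 v)
    (hdiv : ∀ x : Fin 2 → ℝ, (gradM v x).trace = 0) :
    let Ω : Set (Fin 2 → ℝ) := {x | 0 < x 0 ∧ x 0 < l ∧ 0 < x 1 ∧ x 1 < l}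
    let rad : (Fin 2 → ℝ) → ℝ :=
      fun x => Real.sqrt ((x 0 - l / 2) ^ 2 + (x 1 - l / 2) ^ 2)
    let B : Set (Fin 2 → ℝ) := {x | R < rad x ∧ rad x < R + w}
    let p_o : ℝ := -(π * μ / (2 * l ^ 2)) * ((R + w) ^ 2 - R ^ 2)
    let p_i : ℝ := μ * Real.log (1 + w / R) + p_o
    let p : (Fin 2 → ℝ) → ℝ := fun x =>
      if R + w ≤ rad x then p_o
      else if rad x ≤ R then p_i
      else μ * Real.log ((R + w) / rad x) + p_o
    let uθ : (Fin 2 → ℝ) → Fin 2 → ℝ :=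
      fun x => ![-(x 1 - l / 2) / rad x, (x 0 - l / 2) / rad x]
    let Phat : (Fin 2 → ℝ) → Matrix (Fin 2) (Fin 2) ℝ :=
      fun x => (-(p x)) • (1 : Matrix (Fin 2) (Fin 2) ℝ) +
        μ • Matrix.vecMulVec (uθ x) (uθ x)
    (∫ x in Ω, p x * (gradM v x).trace) = ∫ x in B, frob (Phat x) (gradM v x) := by
  intro Ω rad B p_o p_i p uθ Phat
  set c : Fin 2 → ℝ := ![l / 2, l / 2]
  have hrad : ∀ ρ θ, 0 ≤ ρ → rad (polarPoint c ρ θ) = ρ := fun ρ θ hρ =>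
    sqrt_polarPoint_sub_center (c := c) hρ θ
  have huθ : ∀ ρ θ, 0 < ρ → uθ (polarPoint c ρ θ) = angularUnit θ := by
    intro ρ θ hρ
    funext i
    fin_cases i <;> simp [uθ, hrad ρ θ hρ.le, angularUnit, c] <;> field_simp
  have hB : MeasurableSet B := by simp only [B, rad]; measurability
  have hpolar : ∀ q ∈ polarCoord.target,
      q.1 • B.indicator (fun x => frob (Phat x) (gradM v x)) (polarPoint c q.1 q.2)
        = (Ioo R (R + w)).indicator (fun ρ => μ * (ρ * hoopStrain v c ρ q.2)) q.1 := by
    rintro ⟨ρ, θ⟩ ⟨hρ, -⟩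
    have hmem : polarPoint c ρ θ ∈ B ↔ ρ ∈ Ioo R (R + w) := by
      change R < rad _ ∧ rad _ < R + w ↔ R < ρ ∧ ρ < R + w
      rw [hrad ρ θ hρ.le]
    by_cases hρB : ρ ∈ Ioo R (R + w)
    · simp only [indicator_of_mem (hmem.2 hρB), indicator_of_mem hρB, Phat, huθ ρ θ hρ,
        frob_smul_one_add_smul_vecMulVec, hdiv, hoopStrain, smul_eq_mul]
      ring
    · rw [indicator_of_notMem (mt hmem.1 hρB), indicator_of_notMem hρB, smul_zero]
  rw [show ∫ x in Ω, p x * (gradM v x).trace = 0 by simp [hdiv], ← integral_indicator hB,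
    integral_comp_polarPoint c, setIntegral_congr_fun polarCoord.open_target.measurableSet hpolar,
    polarCoord_target, Measure.volume_eq_prod]
  refine (setIntegral_prod_eq_zero_of_forall_setIntegral_eq_zero fun ρ _ => ?_).symm
  by_cases hρB : ρ ∈ Ioo R (R + w)
  · rw [setIntegral_congr_fun measurableSet_Ioo fun θ _ => indicator_of_mem hρB _,
      integral_const_mul, ← integral_Ioc_eq_integral_Ioo,
      ← intervalIntegral.integral_of_le (neg_le_self pi_pos.le),
      integral_mul_hoopStrain_eq_zero c hv hdiv, mul_zero]
  · simp [indicator_of_notMem hρB]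

/-- Equilibrium of the immersed ring: the zero velocity field together with the
piecewise log pressure profile satisfies the weak momentum balance
`∫_Ω p div v = ∫_B P̂ : ∇v` with `P̂ = -p_s I + μ uθ⊗uθ` (so `F = I`), for every
divergence-free `C¹` test field `v` compactly supported in `Ω`. -/
theorem ring_weak_momentum_balance (μ R w l : ℝ) (hμ : 0 < μ) (hR : 0 < R)
    (hw : 0 < w) (hl : R + w < l / 2)
    (v : (Fin 2 → ℝ) → (Fin 2 → ℝ)) (hv : ContDiff ℝ 1 v)
    (hvc : HasCompactSupport v)
    (hvΩ : tsupport v ⊆ {x : Fin 2 → ℝ | 0 < x 0 ∧ x 0 < l ∧ 0 < x 1 ∧ x 1 < l})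
    (hdiv : ∀ x : Fin 2 → ℝ, (gradM v x).trace = 0) :
    let Ω : Set (Fin 2 → ℝ) := {x | 0 < x 0 ∧ x 0 < l ∧ 0 < x 1 ∧ x 1 < l}
    let rad : (Fin 2 → ℝ) → ℝ :=
      fun x => Real.sqrt ((x 0 - l / 2) ^ 2 + (x 1 - l / 2) ^ 2)
    let B : Set (Fin 2 → ℝ) := {x | R < rad x ∧ rad x < R + w}
    let p_o : ℝ := -(π * μ / (2 * l ^ 2)) * ((R + w) ^ 2 - R ^ 2)
    let p_i : ℝ := μ * Real.log (1 + w / R) + p_o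
    let p : (Fin 2 → ℝ) → ℝ := fun x =>
      if R + w ≤ rad x then p_o
      else if rad x ≤ R then p_i
      else μ * Real.log ((R + w) / rad x) + p_o
    let uθ : (Fin 2 → ℝ) → Fin 2 → ℝ :=
      fun x => ![-(x 1 - l / 2) / rad x, (x 0 - l / 2) / rad x]
    let Phat : (Fin 2 → ℝ) → Matrix (Fin 2) (Fin 2) ℝ :=
      fun x => (-(p x)) • (1 : Matrix (Fin 2) (Fin 2) ℝ) +
        μ • Matrix.vecMulVec (uθ x) (uθ x)
    (∫ x in Ω, p x * (gradM v x).trace) = ∫ x in B, frob (Phat x) (gradM v x) :=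
  ring_weak_momentum_balance_general μ R w l v hv hdiv
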